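/- arXiv:math/0601083 — 5 statements merged into one kernel-verified Lean document; each statement's English description precedes it below -/
import Mathlib

section
/- Let J be a set, u ⊆ J, and c ⊆ 2^J (the set of functions from J to {0,1}) be such that the set of restrictions c↾u = {b↾u : b ∈ c} equals all of 2^u. Suppose c = ⋃_{i∈M} c_i is a finite union (M a natural number) and u_0, …, u_{M-1} are pairwise disjoint subsets of u. Then there exists i ∈ M such that c_i↾u_i = 2^{u_i}. -/
/-- covering lemma for restrictions of sets of binary functions. -/
theorem stmt_0 {J : Type*} (u : Set J) (c : Set (J → Bool)) (M : ℕ)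
    (ci : Fin M → Set (J → Bool)) (ui : Fin M → Set J)
    (hc : c = ⋃ i, ci i)
    (hui : ∀ i, ui i ⊆ u)
    (hdisj : ∀ i j, i ≠ j → Disjoint (ui i) (ui j))
    (hcover : ∀ a : J → Bool, ∃ b ∈ c, ∀ x ∈ u, b x = a x) :
    ∃ i : Fin M, ∀ a : J → Bool, ∃ b ∈ ci i, ∀ x ∈ ui i, b x = a x := by
  by_contra h
  push_neg at h
  choose a ha using h
  classical
  set f : J → Bool := fun x => if h : ∃ i, x ∈ ui i then a h.choose x else false with hf
  have hfx : ∀ i, ∀ x ∈ ui i, f x = a i x := by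
    intro i x hx
    have hex : ∃ j, x ∈ ui j := ⟨i, hx⟩
    have := hex.choose_spec
    have : hex.choose = i := by
      by_contra hne
      exact (hdisj _ _ hne).ne_of_mem hex.choose_spec hx rfl
    simp [hf, dif_pos hex, this]
  obtain ⟨b, hb, hbf⟩ := hcover f
  rw [hc] at hb
  obtain ⟨_, ⟨i, rfl⟩, hbi⟩ := hb
  obtain ⟨x, hx, hne⟩ := ha i b hbi
  exact hne ((hbf x (hui i hx)).trans (hfx i x hx))
end

section
/- If f, g : ω → ω satisfy g(n) ≥ 1 and (n+1)·g(n) < f(n) for all n, then no countable family of (f,g)-slaloms is an (∃,f,g)-cover; hence c^∃_{f,g} > ℵ0. -/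
def IsSlalom (f g : ℕ → ℕ) (S : ℕ → Finset ℕ) : Prop :=
  ∀ n, S n ⊆ Finset.range (f n) ∧ (S n).card ≤ g n

def IsForallCover (f g : ℕ → ℕ) (Fam : Set (ℕ → Finset ℕ)) : Prop :=
  (∀ S ∈ Fam, IsSlalom f g S) ∧
    ∀ r : ℕ → ℕ, (∀ n, r n < f n) → ∃ S ∈ Fam, ∀ n, r n ∈ S n

def IsExistsCover (f g : ℕ → ℕ) (Fam : Set (ℕ → Finset ℕ)) : Prop :=
  (∀ S ∈ Fam, IsSlalom f g S) ∧
    ∀ r : ℕ → ℕ, (∀ n, r n < f n) → ∃ S ∈ Fam, ∀ m, ∃ n, m ≤ n ∧ r n ∈ S n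

/-- the minimal cardinality of a `(∀,f,g)`-cover -/
noncomputable def cForall (f g : ℕ → ℕ) : Cardinal :=
  sInf { κ | ∃ Fam : Set (ℕ → Finset ℕ), IsForallCover f g Fam ∧ Cardinal.mk ↥Fam = κ }

/-- the minimal cardinality of an `(∃,f,g)`-cover -/
noncomputable def cExists (f g : ℕ → ℕ) : Cardinal :=
  sInf { κ | ∃ Fam : Set (ℕ → Finset ℕ), IsExistsCover f g Fam ∧ Cardinal.mk ↥Fam = κ }

lemma fpos (f g : ℕ → ℕ) (_h1 : ∀ n, 1 ≤ g n) (h2 : ∀ n, (n + 1) * g n < f n) (n : ℕ) :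
    0 < f n := lt_of_le_of_lt (Nat.zero_le _) (h2 n)

lemma no_countable_cover (f g : ℕ → ℕ) (h1 : ∀ n, 1 ≤ g n) (h2 : ∀ n, (n + 1) * g n < f n) :
    ∀ Fam : Set (ℕ → Finset ℕ), Fam.Countable → ¬ IsExistsCover f g Fam := by
  intro Fam hc hcov
  obtain ⟨hsl, hcv⟩ := hcov
  rcases Fam.eq_empty_or_nonempty with rfl | hne
  · obtain ⟨S, hS, _⟩ := hcv (fun _ => 0) (fun n => fpos f g h1 h2 n)
    exact hS
  obtain ⟨e, rfl⟩ := hc.exists_eq_range hne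
  set B : ℕ → Finset ℕ := fun n => (Finset.range (n + 1)).biUnion (fun i => e i n) with hB
  have hBcard : ∀ n, (B n).card ≤ (n + 1) * g n := by
    intro n
    calc (B n).card ≤ ∑ i ∈ Finset.range (n + 1), (e i n).card := Finset.card_biUnion_le
    _ ≤ ∑ i ∈ Finset.range (n + 1), g n := by
        apply Finset.sum_le_sum
        intro i _
        exact (hsl (e i) ⟨i, rfl⟩ n).2
    _ = (n + 1) * g n := by rw [Finset.sum_const, Finset.card_range, smul_eq_mul]
  have hnonempty : ∀ n, (Finset.range (f n) \ B n).Nonempty := by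
    intro n
    rw [← Finset.card_pos]
    have := Finset.le_card_sdiff (B n) (Finset.range (f n))
    have h3 : (B n).card < (Finset.range (f n)).card := by
      rw [Finset.card_range]; exact lt_of_le_of_lt (hBcard n) (h2 n)
    omega
  set r : ℕ → ℕ := fun n => (Finset.range (f n) \ B n).min' (hnonempty n) with hr
  have hrmem : ∀ n, r n ∈ Finset.range (f n) \ B n := fun n => Finset.min'_mem _ _
  have hrlt : ∀ n, r n < f n := by
    intro n
    have := (Finset.mem_sdiff.mp (hrmem n)).1
    exact Finset.mem_range.mp this
  obtain ⟨S, ⟨i, rfl⟩, hS⟩ := hcv r hrlt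
  obtain ⟨n, hin, hmem⟩ := hS i
  have : r n ∈ B n := Finset.mem_biUnion.mpr ⟨i, Finset.mem_range.mpr (by omega), hmem⟩
  exact (Finset.mem_sdiff.mp (hrmem n)).2 this

/-- if g(n) ≥ 1 and (n+1)·g(n) < f(n) for all n, no countable family is an
(∃,f,g)-cover, hence c^∃ > ℵ₀. -/
theorem stmt_3 (f g : ℕ → ℕ) (h1 : ∀ n, 1 ≤ g n) (h2 : ∀ n, (n + 1) * g n < f n) :
    (∀ Fam : Set (ℕ → Finset ℕ), Fam.Countable → ¬ IsExistsCover f g Fam) ∧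
    Cardinal.aleph0 < cExists f g := by
  refine ⟨no_countable_cover f g h1 h2, ?_⟩
  have hne : { κ | ∃ Fam : Set (ℕ → Finset ℕ), IsExistsCover f g Fam ∧ Cardinal.mk ↥Fam = κ }.Nonempty := by
    refine ⟨_, {S | IsSlalom f g S}, ⟨fun S hS => hS, ?_⟩, rfl⟩
    intro r hr
    refine ⟨fun n => {r n}, ?_, ?_⟩
    · intro n
      constructor
      · simp [Finset.singleton_subset_iff, hr n]
      · simpa using h1 n
    · intro m; exact ⟨m, le_refl m, Finset.mem_singleton_self _⟩
  have hmem := csInf_mem hne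
  obtain ⟨Fam, hFam, hcard⟩ := hmem
  rw [cExists, ← hcard]
  by_contra h
  push_neg at h
  have : Fam.Countable := by
    exact Set.countable_coe_iff.mp (Cardinal.mk_le_aleph0_iff.mp h)
  exact no_countable_cover f g h1 h2 Fam this hFam
end

section
/- Abstract decisiveness composition (Lemma 4.2(3) of the paper): work in an abstract creature framework (finite val, norm nor, transitive reflexive successor relation Σ with val and nor decreasing along Σ). Define: 𝔠 is hereditarily (B,r)-big if every 𝔡 ∈ Σ(𝔠) with nor(𝔡) > 1 is (B,r)-big; 𝔠 is (K,n,r)-decisive if there are 𝔡⁻, 𝔡⁺ ∈ Σ(𝔠) with nor(𝔡⁻), nor(𝔡⁺) ≥ nor(𝔠) − r, |val(𝔡⁻)| ≤ K, and 𝔡⁺ hereditarily (2^{K^n}, r)-big; 𝔠 is (n,r)-decisive if it is (K,n,r)-decisive for some K. Suppose every creature with norm > 1 in the ambient family is (n,r)-decisive and (B,r)-big (B ≥ 1), δ ∈ ω, and nor(𝔠) > 1 + δ·r. Then there is 𝔡 ∈ Σ(𝔠) which is hereditarily (EXP(B,n,δ), r)-big with nor(𝔡) ≥ nor(𝔠)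 − δ·r, where EXP(B,n,0) = B, EXP(B,n,m+1) = 2^{EXP(B,n,m)^n}. -/
/-- An abstract creature framework: each creature has a finite nonempty set of values,
a nonnegative real norm (singleton value set forces norm 0), and a reflexive transitive
successor relation along which values and norms decrease. -/
structure CreatureSystem (α : Type*) (V : Type*) where
  val : α → Finset V
  nor : α → ℝ
  succ : α → α → Prop
  val_nonempty : ∀ c, (val c).Nonempty
  nor_nonneg : ∀ c, 0 ≤ nor c
  nor_of_singleton : ∀ c, (val c).card = 1 → nor c = 0
  succ_refl : ∀ c, succ c c
  succ_trans : ∀ c d e, succ c d → succ d e → succ c e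
  val_subset : ∀ c d, succ c d → val d ⊆ val c
  nor_le : ∀ c d, succ c d → nor d ≤ nor c

variable {α V : Type*}

/-- `c` is (B,r)-big: every B-coloring of val(c) has a monochromatic successor losing
at most r in norm. -/
def CreatureSystem.Big (CS : CreatureSystem α V) (B : ℕ) (r : ℝ) (c : α) : Prop :=
  ∀ F : V → Fin B, ∃ d, CS.succ c d ∧ CS.nor c - r ≤ CS.nor d ∧
    ∀ x ∈ CS.val d, ∀ y ∈ CS.val d, F x = F y

/-- `c` is hereditarily (B,r)-big: every successor with norm > 1 is (B,r)-big. -/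
def CreatureSystem.HerBig (CS : CreatureSystem α V) (B : ℕ) (r : ℝ) (c : α) : Prop :=
  ∀ d, CS.succ c d → 1 < CS.nor d → CS.Big B r d

/-- `c` is (K,n,r)-decisive: it has a K-small successor and a K-big successor. -/
def CreatureSystem.DecisiveK (CS : CreatureSystem α V) (K n : ℕ) (r : ℝ) (c : α) : Prop :=
  ∃ dm dp, CS.succ c dm ∧ CS.succ c dp ∧
    CS.nor c - r ≤ CS.nor dm ∧ CS.nor c - r ≤ CS.nor dp ∧
    (CS.val dm).card ≤ K ∧ CS.HerBig (2 ^ K ^ n) r dp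

/-- `c` is (n,r)-decisive: it is (K,n,r)-decisive for some K. -/
def CreatureSystem.Decisive (CS : CreatureSystem α V) (n : ℕ) (r : ℝ) (c : α) : Prop :=
  ∃ K, CS.DecisiveK K n r c

/-- `c` is r-halving. -/
def CreatureSystem.Halving (CS : CreatureSystem α V) (r : ℝ) (c : α) : Prop :=
  ∃ h, CS.succ c h ∧ CS.nor c - r ≤ CS.nor h ∧
    ∀ d, CS.succ h d → 0 < CS.nor d →
      ∃ d', CS.succ c d' ∧ CS.nor c - r ≤ CS.nor d' ∧ CS.val d' ⊆ CS.val d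

def EXP (B n : ℕ) : ℕ → ℕ
  | 0 => B
  | m + 1 => 2 ^ (EXP B n m) ^ n


lemma CreatureSystem.big_anti (CS : CreatureSystem α V) {B B' : ℕ} {r : ℝ} {c : α}
    (h : B ≤ B') (hbig : CS.Big B' r c) : CS.Big B r c := by
  intro F
  obtain ⟨d, hd1, hd2, hd3⟩ := hbig (fun v => Fin.castLE h (F v))
  exact ⟨d, hd1, hd2, fun x hx y hy => Fin.castLE_injective h (hd3 x hx y hy)⟩

lemma CreatureSystem.herBig_anti (CS : CreatureSystem α V) {B B' : ℕ} {r : ℝ} {c : α}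
    (h : B ≤ B') (hbig : CS.HerBig B' r c) : CS.HerBig B r c :=
  fun d hd h1 => CS.big_anti h (hbig d hd h1)

lemma EXP_mono {B B' : ℕ} (n : ℕ) (h : B ≤ B') : ∀ m, EXP B n m ≤ EXP B' n m := by
  intro m
  induction m with
  | zero => exact h
  | succ m ih =>
    simp only [EXP]
    exact Nat.pow_le_pow_right (by norm_num) (Nat.pow_le_pow_left ih n)

lemma EXP_succ_eq (B n m : ℕ) : EXP B n (m + 1) = EXP (2 ^ B ^ n) n m := by
  induction m with
  | zero => rfl
  | succ m ih => simp only [EXP] at *; rw [ih]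

lemma EXP_pos {B : ℕ} (hB : 1 ≤ B) (n : ℕ) : ∀ m, 1 ≤ EXP B n m := by
  intro m
  induction m with
  | zero => exact hB
  | succ m ih => exact Nat.one_le_two_pow

lemma small_not_big (CS : CreatureSystem α V) {B : ℕ} {r : ℝ} {c : α}
    (hB : 1 ≤ B) (hcard : (CS.val c).card ≤ B) (hbig : CS.Big B r c)
    (hn : r < CS.nor c) : False := by
  classical
  set F : V → Fin B := fun x =>
    if h : x ∈ CS.val c then Fin.castLE hcard ((CS.val c).equivFin ⟨x, h⟩)
    else ⟨0, hB⟩ with hF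
  obtain ⟨d, hd1, hd2, hd3⟩ := hbig F
  have hsub : CS.val d ⊆ CS.val c := CS.val_subset c d hd1
  obtain ⟨x, hx⟩ := CS.val_nonempty d
  have hcard1 : (CS.val d).card = 1 := by
    rw [Finset.card_eq_one]
    refine ⟨x, Finset.eq_singleton_iff_unique_mem.2 ⟨hx, fun y hy => ?_⟩⟩
    have := hd3 y hy x hx
    simp only [hF, dif_pos (hsub hy), dif_pos (hsub hx)] at this
    have := Fin.castLE_injective hcard this
    have := (CS.val c).equivFin.injective this
    exact Subtype.ext_iff.mp this
  have h0 : CS.nor d = 0 := CS.nor_of_singleton d hcard1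
  have := CS.nor_le c d hd1
  linarith

lemma aux_stmt15 {α V : Type*} (CS : CreatureSystem α V) (n : ℕ) (r : ℝ)
    (hr : 0 < r) (hr1 : r ≤ 1)
    (hdec : ∀ c, 1 < CS.nor c → CS.Decisive n r c) :
    ∀ (δ B : ℕ), 1 ≤ B → ∀ c : α, CS.HerBig B r c → 1 + (δ : ℝ) * r < CS.nor c →
    ∃ d, CS.succ c d ∧ CS.HerBig (EXP B n δ) r d ∧
      CS.nor c - (δ : ℝ) * r ≤ CS.nor d := by
  intro δ
  induction δ with
  | zero =>
    intro B hB c hher hc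
    exact ⟨c, CS.succ_refl c, hher, by simp⟩
  | succ δ ih =>
    intro B hB c hher hc
    have hδr : 0 ≤ (δ : ℝ) * r := by positivity
    have h1c : 1 < CS.nor c := by push_cast at hc ⊢; nlinarith
    obtain ⟨K, dm, dp, hcdm, hcdp, hnm, hnp, hcard, hherp⟩ := hdec c h1c
    have hnm1 : 1 < CS.nor dm := by push_cast at hc; nlinarith
    have hbigm : CS.Big B r dm := hher dm hcdm hnm1
    have hBK : B ≤ K := by
      by_contra h
      push_neg at h
      exact small_not_big CS hB (hcard.trans (Nat.le_of_lt h)) hbigm (by nlinarith)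
    have hnp1 : 1 + (δ : ℝ) * r < CS.nor dp := by push_cast at hc; nlinarith
    obtain ⟨d, hd1, hd2, hd3⟩ := ih (2 ^ K ^ n) Nat.one_le_two_pow dp hherp hnp1
    refine ⟨d, CS.succ_trans c dp d hcdp hd1, ?_, ?_⟩
    · refine CS.herBig_anti ?_ hd2
      rw [EXP_succ_eq]
      exact EXP_mono n (Nat.pow_le_pow_right (by norm_num) (Nat.pow_le_pow_left hBK n)) δ
    · push_cast
      linarith

/-- from decisiveness and (B,r)-bigness, increase hereditary bigness to
EXP(B,n,δ) while losing at most δ·r in norm. -/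
theorem stmt_15 {α V : Type*} (CS : CreatureSystem α V) (n B δ : ℕ) (r : ℝ)
    (hr : 0 < r) (hr1 : r ≤ 1) (hB : 1 ≤ B)
    (hdec : ∀ c, 1 < CS.nor c → CS.Decisive n r c)
    (hbig : ∀ c, 1 < CS.nor c → CS.Big B r c)
    (c : α) (hc : 1 + (δ : ℝ) * r < CS.nor c) :
    ∃ d, CS.succ c d ∧ CS.HerBig (EXP B n δ) r d ∧
      CS.nor c - (δ : ℝ) * r ≤ CS.nor d := by
  exact aux_stmt15 CS n r hr hr1 hdec δ B hB c (fun d hd h1 => hbig d h1) hc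
end

section
/- Multi-dimensional bigness from decisiveness (Lemma 4.3): in the abstract creature framework, let k, m, t ≥ 1, 0 < r ≤ 1, and let 𝔠_0, …, 𝔠_{k−1} be creatures such that: nor(𝔠_i) > 1 + r·(k−1) for each i; every creature with norm > 1 is (k,r)-decisive; each 𝔠_i is hereditarily (2^{m^t}, r)-big; and F : ∏_{i<k} val(𝔠_i) → 2^{m^t} is any function. Then there exist 𝔡_i ∈ Σ(𝔠_i) with nor(𝔡_i) ≥ nor(𝔠_i) − r·k such that F is constant on ∏_{i<k} val(𝔡_i). -/
variable {α V : Type*}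

/-
Induct on the dimension `k`. A `(2 ^ N, r)`-big creature of norm `> r` has more than `2 ^ N`
values, so every decisiveness witness satisfies `N < K i`. Take the coordinate `j` with the least
witness `K j`, pass to its `K j`-small successor `e` there and to the `K i`-big successors
elsewhere. A `2 ^ N`-colouring of the box induces a colouring of the other `k - 1` coordinates by
maps `val e → Fin (2 ^ N)`, i.e. by `2 ^ (N * P)` colours with `P = #(val e) ≤ K j`; since
`N * P ≤ K i ^ 2 ≤ K i ^ k`, the induction hypothesis makes it constant, and then bigness of `e`
homogenises coordinate `j`. Each step costs `r` in every coordinate.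
-/

theorem exists_encoding_fin_two_pow {ι V : Type*} (S : Finset V) (N : ℕ)
    (f : ι → V → Fin (2 ^ N)) :
    ∃ g : ι → Fin (2 ^ (N * S.card)), ∀ x y, g x = g y → ∀ v ∈ S, f x v = f y v := by
  classical
  have hcard : Fintype.card (S → Fin (2 ^ N)) = 2 ^ (N * S.card) := by
    simp [pow_mul]
  let e := Fintype.equivFinOfCardEq hcard
  exact ⟨fun x => e fun v => f x v, fun x y hxy v hv => congrFun (e.injective hxy) ⟨v, hv⟩⟩

namespace CreatureSystem

variable {α V : Type*} {CS : CreatureSystem α V}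

theorem Big.mono {B B' : ℕ} {r : ℝ} {c : α} (hc : CS.Big B r c) (h : B' ≤ B) :
    CS.Big B' r c := by
  intro F
  obtain ⟨d, hcd, hnor, hconst⟩ := hc (Fin.castLE h ∘ F)
  exact ⟨d, hcd, hnor, fun x hx y hy => Fin.castLE_injective h (hconst x hx y hy)⟩

theorem HerBig.mono {B B' : ℕ} {r : ℝ} {c : α} (hc : CS.HerBig B r c) (h : B' ≤ B) :
    CS.HerBig B' r c :=
  fun d hcd hd => (hc d hcd hd).mono h

/-- A colouring injective on `val c` has only singleton, hence norm-`0`, homogeneous successors. -/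
theorem Big.lt_card {B : ℕ} {r : ℝ} {c : α} (hc : CS.Big B r c)
    (hr : r < CS.nor c) : B < (CS.val c).card := by
  by_contra! hle
  obtain ⟨f⟩ : Nonempty (CS.val c ↪ Fin B) :=
    Function.Embedding.nonempty_of_card_le (by simpa using hle)
  have hB : 0 < B := (Finset.card_pos.2 (CS.val_nonempty c)).trans_le hle
  classical
  obtain ⟨d, hcd, hnor, hconst⟩ :=
    hc fun v => if hv : v ∈ CS.val c then f ⟨v, hv⟩ else ⟨0, hB⟩
  have hsub := CS.val_subset c d hcd
  have hsingleton : (CS.val d).card = 1 := by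
    refine Finset.card_eq_one.2 ⟨_, Finset.eq_singleton_iff_unique_mem.2
      ⟨(CS.val_nonempty d).choose_spec, fun x hx => ?_⟩⟩
    have h := hconst x hx _ (CS.val_nonempty d).choose_spec
    rw [dif_pos (hsub hx), dif_pos (hsub (CS.val_nonempty d).choose_spec)] at h
    exact congrArg Subtype.val (f.injective h)
  linarith [CS.nor_of_singleton d hsingleton]

variable (CS) in
def box {k : ℕ} (d : Fin k → α) : Finset (Fin k → V) :=
  Fintype.piFinset fun i => CS.val (d i)

variable (CS) in
def BigTuple {k : ℕ} (B : ℕ) (s : ℝ) (c : Fin k → α) : Prop :=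
  ∀ F : (Fin k → V) → Fin B, ∃ d : Fin k → α, (∀ i, CS.succ (c i) (d i)) ∧
    (∀ i, CS.nor (c i) - s ≤ CS.nor (d i)) ∧ ∀ x ∈ CS.box d, ∀ y ∈ CS.box d, F x = F y

variable (CS) in
theorem bigTuple_fin_zero (B : ℕ) (s : ℝ) (c : Fin 0 → α) : CS.BigTuple B s c :=
  fun F =>
    ⟨c, fun i => i.elim0, fun i => i.elim0, fun x _ y _ => congrArg F (Subsingleton.elim x y)⟩

theorem BigTuple.of_succ {k B : ℕ} {r s : ℝ} {c d : Fin k → α} (hd : CS.BigTuple B s d)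
    (hcd : ∀ i, CS.succ (c i) (d i)) (hnor : ∀ i, CS.nor (c i) - r ≤ CS.nor (d i)) :
    CS.BigTuple B (r + s) c := by
  intro F
  obtain ⟨e, hde, hnor', hconst⟩ := hd F
  refine ⟨e, fun i => CS.succ_trans _ _ _ (hcd i) (hde i), fun i => ?_, hconst⟩
  linarith [hnor i, hnor' i]

theorem Big.bigTuple_insertNth {k N : ℕ} {r s : ℝ} {e : α} (he : CS.Big (2 ^ N) r e)
    {c : Fin k → α} (hc : CS.BigTuple (2 ^ (N * (CS.val e).card)) s c) (hrs : r ≤ s)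
    (j : Fin (k + 1)) : CS.BigTuple (2 ^ N) s (j.insertNth e c) := by
  intro F
  obtain ⟨g, hg⟩ := exists_encoding_fin_two_pow (CS.val e) N fun x v => F (j.insertNth v x)
  obtain ⟨d, hcd, hnor, hconst⟩ := hc g
  obtain ⟨x₀, hx₀⟩ : (CS.box d).Nonempty :=
    Fintype.piFinset_nonempty.2 fun i => CS.val_nonempty (d i)
  obtain ⟨dj, hedj, hnorj, hconstj⟩ := he fun v => F (j.insertNth v x₀)
  have hmem : ∀ z ∈ CS.box (j.insertNth dj d),
      z j ∈ CS.val dj ∧ j.removeNth z ∈ CS.box d := by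
    intro z hz
    simpa [box, Fin.mem_piFinset_iff_pivot_removeNth j, Fin.removeNth] using hz
  have hrow : ∀ z ∈ CS.box (j.insertNth dj d), F z = F (j.insertNth (z j) x₀) := by
    intro z hz
    conv_lhs => rw [← Fin.insertNth_self_removeNth j z]
    exact hg _ _ (hconst _ (hmem z hz).2 _ hx₀) _ (CS.val_subset _ _ hedj (hmem z hz).1)
  refine ⟨j.insertNth dj d, ?_, ?_, fun x hx y hy => ?_⟩
  · simpa [Fin.forall_iff_succAbove j] using ⟨hedj, hcd⟩
  · simp only [Fin.forall_iff_succAbove j, Fin.insertNth_apply_same,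
      Fin.insertNth_apply_succAbove]
    exact ⟨by linarith, hnor⟩
  · rw [hrow x hx, hrow y hy]
    exact hconstj _ (hmem x hx).1 _ (hmem y hy).1

theorem bigTuple_of_decisive_succ {n k N : ℕ} {r : ℝ} (hr : 0 ≤ r) (hr1 : r ≤ 1)
    (hn : 2 ≤ n) (hk : 1 ≤ k)
    (IH : ∀ (N : ℕ) (c : Fin k → α), (∀ i, 1 + r * (k - 1) < CS.nor (c i)) →
      (∀ i, CS.HerBig (2 ^ N) r (c i)) → CS.BigTuple (2 ^ N) (r * k) c)
    {c : Fin (k + 1) → α} (hnor : ∀ i, 1 + r * k < CS.nor (c i))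
    (hdec : ∀ i, CS.Decisive n r (c i)) (hher : ∀ i, CS.HerBig (2 ^ N) r (c i)) :
    CS.BigTuple (2 ^ N) (r * (k + 1)) c := by
  have hrk : r ≤ r * k := le_mul_of_one_le_right hr (by exact_mod_cast hk)
  choose K dm dp hdm hdp hnorm hnorp hcard hherp using hdec
  obtain ⟨j, hj⟩ := Finite.exists_min K
  have hbig : ∀ i, CS.Big (2 ^ N) r (dm i) :=
    fun i => hher i (dm i) (hdm i) (by linarith [hnorm i, hnor i])
  have hKlt : ∀ i, 2 ^ N < K i :=
    fun i => ((hbig i).lt_card (by linarith [hnorm i, hnor i])).trans_le (hcard i)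
  have hNP : ∀ i, N * (CS.val (dm j)).card ≤ K i ^ n := fun i => calc
    N * (CS.val (dm j)).card ≤ K i * K i :=
      Nat.mul_le_mul (N.lt_two_pow_self.trans (hKlt i)).le ((hcard j).trans (hj i))
    _ = K i ^ 2 := (sq _).symm
    _ ≤ K i ^ n := Nat.pow_le_pow_right (by linarith [hKlt i, N.one_le_two_pow]) hn
  have hrest : CS.BigTuple (2 ^ (N * (CS.val (dm j)).card)) (r * k) (j.removeNth dp) :=
    IH _ _ (fun i => show _ < CS.nor (dp (j.succAbove i)) by
        linarith [hnorp (j.succAbove i), hnor (j.succAbove i)])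
      fun i => (hherp _).mono (Nat.pow_le_pow_right two_pos (hNP _))
  have hsucc : ∀ i, CS.succ (c i) (j.insertNth (dm j) (j.removeNth dp) i) := by
    simp only [Fin.forall_iff_succAbove j, Fin.insertNth_apply_same,
      Fin.insertNth_apply_succAbove, Fin.removeNth]
    exact ⟨hdm j, fun i => hdp _⟩
  have hloss : ∀ i, CS.nor (c i) - r ≤ CS.nor (j.insertNth (dm j) (j.removeNth dp) i) := by
    simp only [Fin.forall_iff_succAbove j, Fin.insertNth_apply_same,
      Fin.insertNth_apply_succAbove, Fin.removeNth]
    exact ⟨hnorm j, fun i => hnorp _⟩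
  convert ((hbig j).bigTuple_insertNth hrest hrk j).of_succ hsucc hloss using 1
  ring

theorem bigTuple_of_decisive {n k : ℕ} {r : ℝ} (hr : 0 ≤ r) (hr1 : r ≤ 1)
    (hdec : ∀ x, 1 < CS.nor x → CS.Decisive n r x) (hk : 1 ≤ k) (hkn : k ≤ n) (N : ℕ)
    (c : Fin k → α) (hnor : ∀ i, 1 + r * ((k : ℝ) - 1) < CS.nor (c i))
    (hher : ∀ i, CS.HerBig (2 ^ N) r (c i)) : CS.BigTuple (2 ^ N) (r * k) c := by
  induction k, hk using Nat.le_induction generalizing N with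
  | base =>
    have hbig := hher 0 (c 0) (CS.succ_refl _) (by simpa using hnor 0)
    simpa using hbig.bigTuple_insertNth (CS.bigTuple_fin_zero _ r (Fin.removeNth 0 c)) le_rfl 0
  | succ k hk IH =>
    push_cast at hnor ⊢
    refine bigTuple_of_decisive_succ hr hr1 (by omega) hk (fun N c' => IH (by omega) N c')
      (by simpa using hnor) (fun i => hdec _ ?_) hher
    linarith [hnor i, mul_nonneg hr k.cast_nonneg]

end CreatureSystem

theorem stmt_17_general {α V : Type*} (CS : CreatureSystem α V) (k m t : ℕ) (r : ℝ)
    (hk : 1 ≤ k) (hr : 0 < r) (hr1 : r ≤ 1)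
    (c : Fin k → α)
    (hnor : ∀ i, 1 + r * ((k : ℝ) - 1) < CS.nor (c i))
    (hdec : ∀ x, 1 < CS.nor x → CS.Decisive k r x)
    (hherbig : ∀ i, CS.HerBig (2 ^ m ^ t) r (c i))
    (F : (Fin k → V) → Fin (2 ^ m ^ t)) :
    ∃ d : Fin k → α, (∀ i, CS.succ (c i) (d i)) ∧
      (∀ i, CS.nor (c i) - r * (k : ℝ) ≤ CS.nor (d i)) ∧
      ∀ x y : Fin k → V, (∀ i, x i ∈ CS.val (d i)) → (∀ i, y i ∈ CS.val (d i)) →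
        F x = F y := by
  obtain ⟨d, hcd, hnord, hconst⟩ :=
    CS.bigTuple_of_decisive hr.le hr1 hdec hk le_rfl (m ^ t) c hnor hherbig F
  exact ⟨d, hcd, hnord, fun x y hx hy =>
    hconst x (Fintype.mem_piFinset.2 hx) y (Fintype.mem_piFinset.2 hy)⟩

/-- multi-dimensional bigness from decisiveness (Lemma 4.3). -/
theorem stmt_17 {α V : Type*} (CS : CreatureSystem α V) (k m t : ℕ) (r : ℝ)
    (hk : 1 ≤ k) (hm : 1 ≤ m) (ht : 1 ≤ t) (hr : 0 < r) (hr1 : r ≤ 1)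
    (c : Fin k → α)
    (hnor : ∀ i, 1 + r * ((k : ℝ) - 1) < CS.nor (c i))
    (hdec : ∀ x, 1 < CS.nor x → CS.Decisive k r x)
    (hherbig : ∀ i, CS.HerBig (2 ^ m ^ t) r (c i))
    (F : (Fin k → V) → Fin (2 ^ m ^ t)) :
    ∃ d : Fin k → α, (∀ i, CS.succ (c i) (d i)) ∧
      (∀ i, CS.nor (c i) - r * (k : ℝ) ≤ CS.nor (d i)) ∧
      ∀ x y : Fin k → V, (∀ i, x i ∈ CS.val (d i)) → (∀ i, y i ∈ CS.val (d i)) →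
        F x = F y :=
  stmt_17_general CS k m t r hk hr hr1 c hnor hdec hherbig F
end

section
/- Homogenization for two-valued functions (Corollary 4.5): in the abstract creature framework, assume k ≥ 1, 0 < r ≤ 1, every creature with norm > 1 is (k,r)-decisive, nor(𝔠_i) > 1 + r·k for 0 ≤ i < k, and F : ∏_{i<k} val(𝔠_i) → {0,1}. Then there are 𝔡_i ∈ Σ(𝔠_i) with nor(𝔡_i) ≥ nor(𝔠_i) − r·(k+1) such that F is constant on ∏_{i<k} val(𝔡_i). -/
variable {α V : Type*}

theorem key_lemma {α V : Type*} (CS : CreatureSystem α V) (k : ℕ) (r : ℝ)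
    (hr : 0 < r)
    (hdec : ∀ x, 1 < CS.nor x → CS.Decisive k r x)
    (F : (Fin k → V) → Bool) :
    ∀ (n : ℕ) (S : Finset (Fin k)) (d : Fin k → α), S.card = n →
      (∀ i ∈ S, 1 + r * (S.card : ℝ) < CS.nor (d i)) →
      (∀ x y : Fin k → V, (∀ i, x i ∈ CS.val (d i)) → (∀ i, y i ∈ CS.val (d i)) →
        (∀ i ∈ S, x i = y i) → F x = F y) →
      ∃ d' : Fin k → α, (∀ i, CS.succ (d i) (d' i)) ∧
        (∀ i ∈ S, CS.nor (d i) - r * ((S.card : ℝ) + 1) ≤ CS.nor (d' i)) ∧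
        (∀ i ∉ S, d' i = d i) ∧
        (∀ x y : Fin k → V, (∀ i, x i ∈ CS.val (d' i)) → (∀ i, y i ∈ CS.val (d' i)) →
          F x = F y) := by
  intro n
  induction n with
  | zero =>
    intro S d hcard hnorm hinv
    have hS : S = ∅ := Finset.card_eq_zero.mp hcard
    subst hS
    exact ⟨d, fun i => CS.succ_refl _, fun i hi => by simp at hi,
      fun i _ => rfl,
      fun x y hx hy => hinv x y hx hy (fun i hi => by simp at hi)⟩
  | succ n IH =>
    intro S d hcard hnorm hinv
    classical
    have hSne : S.Nonempty := Finset.card_pos.mp (hcard ▸ Nat.succ_pos n)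
    have hnor1 : ∀ i ∈ S, 1 < CS.nor (d i) := by
      intro i hi
      have h1 := hnorm i hi
      have h2 : (0:ℝ) ≤ r * (S.card : ℝ) := by positivity
      linarith
    have h1 : ∀ i : Fin k, ∃ K, i ∈ S → CS.DecisiveK K k r (d i) := by
      intro i
      by_cases hi : i ∈ S
      · obtain ⟨K, hK⟩ := hdec (d i) (hnor1 i hi)
        exact ⟨K, fun _ => hK⟩
      · exact ⟨0, fun h => absurd h hi⟩
    choose Kf hKf using h1
    obtain ⟨i0, hi0S, hi0max⟩ := S.exists_max_image Kf hSne
    obtain ⟨dm0, dp, hsdm0, hsdp, hndm0, hndp, hcdm0, hherbig⟩ := hKf i0 hi0S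
    have hK1 : 1 ≤ Kf i0 :=
      le_trans (Finset.card_pos.mpr (CS.val_nonempty dm0)) hcdm0
    have hcardS' : (S.erase i0).card = n := by
      rw [Finset.card_erase_of_mem hi0S, hcard]; rfl
    -- small successors for the other coordinates
    have h2 : ∀ i : Fin k, ∃ e, i ∈ S.erase i0 → CS.succ (d i) e ∧
        CS.nor (d i) - r ≤ CS.nor e ∧ (CS.val e).card ≤ Kf i0 := by
      intro i
      by_cases hi : i ∈ S.erase i0
      · obtain ⟨dmi, dpi, hs1, _, hn1, _, hc1, _⟩ := hKf i (Finset.mem_of_mem_erase hi)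
        exact ⟨dmi, fun _ => ⟨hs1, hn1,
          le_trans hc1 (hi0max i (Finset.mem_of_mem_erase hi))⟩⟩
      · exact ⟨d i, fun h => absurd h hi⟩
    choose dm hdm using h2
    -- default values
    have hx0' : ∀ i, ∃ v, v ∈ CS.val (d i) := fun i => CS.val_nonempty (d i)
    choose x0 hx0 using hx0'
    -- bigness of dp
    have hnordp : 1 < CS.nor dp := by
      have h3 := hnorm i0 hi0S
      rw [hcard] at h3
      push_cast at h3
      have hn0 : (0:ℝ) ≤ r * (n : ℝ) := by positivity
      nlinarith
    have hbig := hherbig dp (CS.succ_refl dp) hnordp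
    -- the color type
    let C := ∀ i : {j // j ∈ S.erase i0}, {v : V // v ∈ CS.val (dm i.1)}
    have hcardC : Fintype.card C ≤ Kf i0 ^ k := by
      have e1 : Fintype.card C = ∏ i : {j // j ∈ S.erase i0}, (CS.val (dm i.1)).card := by
        rw [Fintype.card_pi]
        exact Fintype.prod_congr _ _ (fun i => Fintype.card_coe _)
      have e3 : ∏ i : {j // j ∈ S.erase i0}, (CS.val (dm i.1)).card
          ≤ Kf i0 ^ (Finset.univ : Finset {j // j ∈ S.erase i0}).card :=
        Finset.prod_le_pow_card _ _ _ (fun i _ => (hdm i.1 i.2).2.2)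
      have e4 : (Finset.univ : Finset {j // j ∈ S.erase i0}).card ≤ k := by
        rw [Finset.card_univ]
        calc Fintype.card {j // j ∈ S.erase i0}
            ≤ Fintype.card (Fin k) :=
              Fintype.card_le_of_injective Subtype.val Subtype.val_injective
          _ = k := Fintype.card_fin k
      rw [e1]
      exact le_trans e3 (Nat.pow_le_pow_right hK1 e4)
    have hcardCB : Fintype.card (C → Bool) ≤ 2 ^ Kf i0 ^ k := by
      rw [Fintype.card_fun, Fintype.card_bool]
      exact Nat.pow_le_pow_right (by norm_num) hcardC
    let emb : (C → Bool) ↪ Fin (2 ^ Kf i0 ^ k) :=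
      (Fintype.equivFin (C → Bool)).toEmbedding.trans (Fin.castLEEmb hcardCB)
    let χ : V → (C → Bool) := fun v g =>
      F (fun i => if h : i ∈ S.erase i0 then (g ⟨i, h⟩).1 else if i = i0 then v else x0 i)
    obtain ⟨dst, hsdst, hndst, hconst⟩ := hbig (fun v => emb (χ v))
    have hχconst : ∀ x ∈ CS.val dst, ∀ y ∈ CS.val dst, χ x = χ y := fun x hx y hy =>
      emb.injective (hconst x hx y hy)
    -- the new creatures
    let d1 : Fin k → α := fun i => if i = i0 then dst else if i ∈ S.erase i0 then dm i else d i
    have hd1i0 : d1 i0 = dst := if_pos rfl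
    have hd1mem : ∀ i ∈ S.erase i0, d1 i = dm i := by
      intro i hi
      have hne : i ≠ i0 := Finset.ne_of_mem_erase hi
      show (if i = i0 then dst else if i ∈ S.erase i0 then dm i else d i) = dm i
      rw [if_neg hne, if_pos hi]
    have hd1out : ∀ i, i ≠ i0 → i ∉ S.erase i0 → d1 i = d i := by
      intro i h1 h2
      show (if i = i0 then dst else if i ∈ S.erase i0 then dm i else d i) = d i
      rw [if_neg h1, if_neg h2]
    have hsucc1 : ∀ i, CS.succ (d i) (d1 i) := by
      intro i
      by_cases h : i = i0
      · subst h; rw [hd1i0]; exact CS.succ_trans _ _ _ hsdp hsdst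
      · by_cases h' : i ∈ S.erase i0
        · rw [hd1mem i h']; exact (hdm i h').1
        · rw [hd1out i h h']; exact CS.succ_refl _
    have hval1 : ∀ i, CS.val (d1 i) ⊆ CS.val (d i) :=
      fun i => CS.val_subset _ _ (hsucc1 i)
    -- invariant for the smaller set
    have hinv' : ∀ x y : Fin k → V, (∀ i, x i ∈ CS.val (d1 i)) → (∀ i, y i ∈ CS.val (d1 i)) →
        (∀ i ∈ S.erase i0, x i = y i) → F x = F y := by
      intro x y hx hy hagree
      let xb : Fin k → V := fun i => if i ∈ S then x i else x0 i
      let yb : Fin k → V := fun i => if i ∈ S then y i else x0 i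
      have hxbmem : ∀ i, xb i ∈ CS.val (d i) := by
        intro i
        by_cases h : i ∈ S
        · show (if i ∈ S then x i else x0 i) ∈ _
          rw [if_pos h]; exact hval1 i (hx i)
        · show (if i ∈ S then x i else x0 i) ∈ _
          rw [if_neg h]; exact hx0 i
      have hybmem : ∀ i, yb i ∈ CS.val (d i) := by
        intro i
        by_cases h : i ∈ S
        · show (if i ∈ S then y i else x0 i) ∈ _
          rw [if_pos h]; exact hval1 i (hy i)
        · show (if i ∈ S then y i else x0 i) ∈ _
          rw [if_neg h]; exact hx0 i
      have hFx : F x = F xb :=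
        hinv x xb (fun i => hval1 i (hx i)) hxbmem
          (fun i hi => (if_pos hi).symm)
      have hFy : F y = F yb :=
        hinv y yb (fun i => hval1 i (hy i)) hybmem
          (fun i hi => (if_pos hi).symm)
      let g : C := fun i => ⟨x i.1, by
        have hm := hx i.1
        rw [hd1mem i.1 i.2] at hm
        exact hm⟩
      let g' : C := fun i => ⟨y i.1, by
        have hm := hy i.1
        rw [hd1mem i.1 i.2] at hm
        exact hm⟩
      have hgg' : g = g' := by
        funext i
        exact Subtype.ext (hagree i.1 i.2)
      have hFxb : F xb = χ (x i0) g := by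
        show F xb = F _
        apply congrArg
        funext i
        by_cases h : i ∈ S.erase i0
        · have hiS : i ∈ S := Finset.mem_of_mem_erase h
          show (if i ∈ S then x i else x0 i)
              = (if h' : i ∈ S.erase i0 then (g ⟨i, h'⟩).1 else if i = i0 then x i0 else x0 i)
          rw [if_pos hiS, dif_pos h]
        · by_cases h2 : i = i0
          · subst h2
            show (if i ∈ S then x i else x0 i)
                = (if h' : i ∈ S.erase i then (g ⟨i, h'⟩).1 else if i = i then x i else x0 i)
            rw [if_pos hi0S, dif_neg h, if_pos rfl]
          · have hiS : i ∉ S := by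
              intro hmem
              exact h (Finset.mem_erase.mpr ⟨h2, hmem⟩)
            show (if i ∈ S then x i else x0 i)
                = (if h' : i ∈ S.erase i0 then (g ⟨i, h'⟩).1 else if i = i0 then x i0 else x0 i)
            rw [if_neg hiS, dif_neg h, if_neg h2]
      have hFyb : F yb = χ (y i0) g' := by
        show F yb = F _
        apply congrArg
        funext i
        by_cases h : i ∈ S.erase i0
        · have hiS : i ∈ S := Finset.mem_of_mem_erase h
          show (if i ∈ S then y i else x0 i)
              = (if h' : i ∈ S.erase i0 then (g' ⟨i, h'⟩).1 else if i = i0 then y i0 else x0 i)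
          rw [if_pos hiS, dif_pos h]
        · by_cases h2 : i = i0
          · subst h2
            show (if i ∈ S then y i else x0 i)
                = (if h' : i ∈ S.erase i then (g' ⟨i, h'⟩).1 else if i = i then y i else x0 i)
            rw [if_pos hi0S, dif_neg h, if_pos rfl]
          · have hiS : i ∉ S := by
              intro hmem
              exact h (Finset.mem_erase.mpr ⟨h2, hmem⟩)
            show (if i ∈ S then y i else x0 i)
                = (if h' : i ∈ S.erase i0 then (g' ⟨i, h'⟩).1 else if i = i0 then y i0 else x0 i)
            rw [if_neg hiS, dif_neg h, if_neg h2]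
      have hxi0 : x i0 ∈ CS.val dst := by rw [← hd1i0]; exact hx i0
      have hyi0 : y i0 ∈ CS.val dst := by rw [← hd1i0]; exact hy i0
      have hχeq : χ (x i0) = χ (y i0) := hχconst _ hxi0 _ hyi0
      calc F x = F xb := hFx
        _ = χ (x i0) g := hFxb
        _ = χ (y i0) g' := by rw [hχeq, hgg']
        _ = F yb := hFyb.symm
        _ = F y := hFy.symm
    -- norms for the smaller set
    have hnorm' : ∀ i ∈ S.erase i0, 1 + r * ((S.erase i0).card : ℝ) < CS.nor (d1 i) := by
      intro i hi
      rw [hd1mem i hi, hcardS']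
      have h3 := hnorm i (Finset.mem_of_mem_erase hi)
      rw [hcard] at h3
      push_cast at h3 ⊢
      have h4 := (hdm i hi).2.1
      linarith
    obtain ⟨d2, hs2, hn2, hout2, hconst2⟩ := IH (S.erase i0) d1 hcardS' hnorm' hinv'
    refine ⟨d2, fun i => CS.succ_trans _ _ _ (hsucc1 i) (hs2 i), ?_, ?_, hconst2⟩
    · intro i hi
      rw [hcard]
      push_cast
      by_cases h : i = i0
      · subst h
        have hd2 : d2 i = d1 i := hout2 i (Finset.notMem_erase i S)
        rw [hd2, hd1i0]
        have hrn : (0:ℝ) ≤ r * (n : ℝ) := by positivity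
        linarith
      · have hi' : i ∈ S.erase i0 := Finset.mem_erase.mpr ⟨h, hi⟩
        have h5 := hn2 i hi'
        rw [hd1mem i hi', hcardS'] at h5
        have h4 := (hdm i hi').2.1
        push_cast at h5
        linarith
    · intro i hi
      have hi' : i ∉ S.erase i0 := fun h => hi (Finset.mem_of_mem_erase h)
      have hne : i ≠ i0 := fun h => hi (h ▸ hi0S)
      rw [hout2 i hi', hd1out i hne hi']

/-- homogenization for two-valued functions (Corollary 4.5). -/
theorem stmt_18 {α V : Type*} (CS : CreatureSystem α V) (k : ℕ) (r : ℝ)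
    (hk : 1 ≤ k) (hr : 0 < r) (hr1 : r ≤ 1)
    (c : Fin k → α)
    (hnor : ∀ i, 1 + r * (k : ℝ) < CS.nor (c i))
    (hdec : ∀ x, 1 < CS.nor x → CS.Decisive k r x)
    (F : (Fin k → V) → Bool) :
    ∃ d : Fin k → α, (∀ i, CS.succ (c i) (d i)) ∧
      (∀ i, CS.nor (c i) - r * ((k : ℝ) + 1) ≤ CS.nor (d i)) ∧
      ∀ x y : Fin k → V, (∀ i, x i ∈ CS.val (d i)) → (∀ i, y i ∈ CS.val (d i)) →
        F x = F y := by
  classical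
  have hcard : (Finset.univ : Finset (Fin k)).card = k := by
    rw [Finset.card_univ, Fintype.card_fin]
  have hnorm : ∀ i ∈ (Finset.univ : Finset (Fin k)),
      1 + r * ((Finset.univ : Finset (Fin k)).card : ℝ) < CS.nor (c i) := by
    intro i _
    rw [hcard]
    exact hnor i
  have hinv : ∀ x y : Fin k → V, (∀ i, x i ∈ CS.val (c i)) → (∀ i, y i ∈ CS.val (c i)) →
      (∀ i ∈ (Finset.univ : Finset (Fin k)), x i = y i) → F x = F y := by
    intro x y _ _ hagree
    have : x = y := funext (fun i => hagree i (Finset.mem_univ i))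
    rw [this]
  obtain ⟨d, hs, hn, _, hc⟩ :=
    key_lemma CS k r hr hdec F k Finset.univ c hcard hnorm hinv
  refine ⟨d, hs, ?_, hc⟩
  intro i
  have := hn i (Finset.mem_univ i)
  rwa [hcard] at this
end
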